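/- Let p_0, ..., p_k be a martingale of probability vectors on a countable set X with p_0 = p constant, where H(p) = -Σ_x p(x) log p(x) < ∞. Then E(Σ_{t=1}^k ||p_t - p_{t-1}||_1) ≤ sqrt(2 k H(p)). -/

import Mathlib

/-!
Fix a coordinate `x` and a step `t`, and write `Q = p_t(x)`, `R = p_{t-1}(x)`, so that
`E[Q | ℱ_{t-1}] = R`. Pointwise, `(q - r)² ≤ r klFun(q / r) · (2q + 4r) / 3` (Pinsker's inequality
for one coordinate), and AM-GM turns this into `2ε|Q - R| ≤ ε² R klFun(Q / R) + (2Q + 4R) / 3`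
for every real `ε`. In expectation, `E[R klFun(Q / R)] = E[η(R)] - E[η(Q)]` with `η = negMulLog`,
because the `ℱ_{t-1}`-measurable factor `log R` can be pulled out of the conditional expectation
(in `ℝ≥0∞`, where its unboundedness does no harm), while `E[(2Q + 4R) / 3] = 2 E[Q]`. Summing over
`x` and `t`, the expected entropies telescope to at most `H(p)`, so the total variation `S`
satisfies `2εS ≤ ε² H(p) + 2k` for all `ε`; the discriminant of this quadratic gives
`S² ≤ 2k H(p)`.
-/

open MeasureTheory Real InformationTheory Set
open scoped ENNReal

lemma monotoneOn_add_one_mul_log_sub :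
    MonotoneOn (fun x => (x + 1) * log x - 2 * (x - 1)) (Ioi 0) := by
  have hderiv : ∀ x ∈ Ioi (0 : ℝ),
      HasDerivAt (fun x => (x + 1) * log x - 2 * (x - 1)) (log x + x⁻¹ - 1) x := by
    intro x hx
    have h := (((hasDerivAt_id' x).add_const 1).mul (hasDerivAt_log (ne_of_gt hx))).sub
      (((hasDerivAt_id' x).sub_const 1).const_mul 2)
    refine h.congr_deriv ?_
    field_simp [ne_of_gt (mem_Ioi.mp hx)]
    ring
  refine monotoneOn_of_hasDerivWithinAt_nonneg (f' := fun x => log x + x⁻¹ - 1) (convex_Ioi 0)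
    (fun x hx => (hderiv x hx).continuousAt.continuousWithinAt) (fun x hx => ?_) (fun x hx => ?_)
  · rw [interior_Ioi] at hx
    exact (hderiv x hx).hasDerivWithinAt
  · rw [interior_Ioi] at hx
    linarith [one_sub_inv_le_log_of_pos (mem_Ioi.mp hx)]

lemma three_mul_sq_sub_one_le_mul_klFun {x : ℝ} (hx : 0 ≤ x) :
    3 * (x - 1) ^ 2 ≤ (2 * x + 4) * klFun x := by
  rcases hx.eq_or_lt with rfl | hx
  · norm_num [klFun_zero]
  set φ : ℝ → ℝ := fun x => (2 * x + 4) * klFun x - 3 * (x - 1) ^ 2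
  set ψ : ℝ → ℝ := fun x => (x + 1) * log x - 2 * (x - 1)
  have hφ' : ∀ y ∈ Ioi (0 : ℝ), HasDerivWithinAt φ (4 * ψ y) (Ioi 0) y := by
    intro y hy
    have h := ((((hasDerivAt_id' y).const_mul 2).add_const 4).mul
      (hasDerivAt_klFun (ne_of_gt hy))).sub (((hasDerivAt_id' y).sub_const 1).pow 2 |>.const_mul 3)
    refine (h.congr_deriv ?_).hasDerivWithinAt
    simp only [ψ, klFun_apply]
    ring
  have hφ : ContinuousOn φ (Ioi 0) := fun y hy => (hφ' y hy).continuousWithinAt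
  have hψ : MonotoneOn ψ (Ioi 0) := monotoneOn_add_one_mul_log_sub
  have hψ1 : ψ 1 = 0 := by simp [ψ]
  suffices φ 1 ≤ φ x by simpa [φ, klFun_one] using this
  rcases le_total x 1 with hx1 | hx1
  · refine antitoneOn_of_hasDerivWithinAt_nonpos (f' := fun y => 4 * ψ y) (convex_Ioc 0 1)
      (hφ.mono Ioc_subset_Ioi_self) (fun y hy => ?_) (fun y hy => ?_)
      ⟨hx, hx1⟩ ⟨one_pos, le_rfl⟩ hx1
    · rw [interior_Ioc] at hy ⊢
      exact (hφ' y hy.1).mono Ioo_subset_Ioi_self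
    · rw [interior_Ioc] at hy
      linarith [hψ hy.1 (mem_Ioi.mpr one_pos) hy.2.le]
  · refine monotoneOn_of_hasDerivWithinAt_nonneg (f' := fun y => 4 * ψ y) (convex_Ici 1)
      (hφ.mono (Ici_subset_Ioi.mpr one_pos)) (fun y hy => ?_) (fun y hy => ?_)
      self_mem_Ici hx1 hx1
    · rw [interior_Ici] at hy ⊢
      exact (hφ' y (Ioi_subset_Ioi zero_le_one hy)).mono (Ioi_subset_Ioi zero_le_one)
    · rw [interior_Ici] at hy
      linarith [hψ (mem_Ioi.mpr one_pos) (Ioi_subset_Ioi zero_le_one hy) (le_of_lt hy)]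

lemma two_mul_abs_sub_le_mul_klFun {q r : ℝ} (hq : 0 ≤ q) (hr : 0 < r) (ε : ℝ) :
    2 * ε * |q - r| ≤ ε ^ 2 * (r * klFun (q / r)) + (2 * q + 4 * r) / 3 := by
  have hpinsker : (q - r) ^ 2 ≤ r * klFun (q / r) * ((2 * q + 4 * r) / 3) :=
    calc (q - r) ^ 2 = r ^ 2 * (3 * (q / r - 1) ^ 2) / 3 := by field_simp
      _ ≤ r ^ 2 * ((2 * (q / r) + 4) * klFun (q / r)) / 3 := by
        gcongr r ^ 2 * ?_ / 3
        exact three_mul_sq_sub_one_le_mul_klFun (div_nonneg hq hr.le)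
      _ = r * klFun (q / r) * ((2 * q + 4 * r) / 3) := by field_simp
  have hkl : 0 ≤ r * klFun (q / r) := mul_nonneg hr.le (klFun_nonneg (div_nonneg hq hr.le))
  nlinarith [sq_nonneg (ε * |q - r| - (2 * q + 4 * r) / 3), sq_abs (q - r), abs_nonneg (q - r),
    sq_nonneg (ε ^ 2 * (r * klFun (q / r)) - (2 * q + 4 * r) / 3)]

lemma mul_klFun_div_eq {q r : ℝ} (hq : 0 ≤ q) (hr : 0 < r) :
    r * klFun (q / r) = q * -log r - negMulLog q + (r - q) := by
  rcases hq.eq_or_lt with rfl | hq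
  · simp [klFun_zero]
  · rw [klFun_apply, log_div hq.ne' hr.ne', negMulLog]
    field_simp
    ring

lemma le_sqrt_mul_of_forall_two_mul_le {A a b : ℝ} (h : ∀ ε, 2 * ε * A ≤ ε ^ 2 * a + b) :
    A ≤ √(a * b) := by
  have hdisc := discrim_le_zero (a := a) (b := -2 * A) (c := b) fun ε => by nlinarith [h ε]
  refine (le_abs_self A).trans (abs_le_sqrt ?_)
  rw [discrim] at hdisc
  nlinarith

lemma Finset.sum_Icc_pred_sub {G : Type*} [AddCommGroup G] (g : ℕ → G) (k : ℕ) :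
    ∑ t ∈ Finset.Icc 1 k, (g (t - 1) - g t) = g 0 - g k := by
  rw [← Finset.Ico_add_one_right_eq_Icc, Finset.sum_Ico_eq_sum_range]
  simpa [add_comm 1] using Finset.sum_range_sub' g k

lemma summable_of_tsum_eq_one {X : Type*} {g : X → ℝ} (h : ∑' x, g x = 1) : Summable g := by
  by_contra hg
  simp [tsum_eq_zero_of_not_summable hg] at h

lemma mem_Icc_of_tsum_eq_one {X : Type*} {g : X → ℝ} (hg : ∀ x, 0 ≤ g x) (h : ∑' x, g x = 1)
    (x : X) : g x ∈ Icc 0 1 :=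
  ⟨hg x, h ▸ (summable_of_tsum_eq_one h).le_tsum x fun y _ => hg y⟩

namespace MeasureTheory

variable {Ω : Type*} {m m0 : MeasurableSpace Ω} {μ : Measure Ω} {Q R : Ω → ℝ}

theorem lintegral_mul_condLExp (hm : m ≤ m0) [SigmaFinite (μ.trim hm)] {X g : Ω → ℝ≥0∞}
    (hX : AEMeasurable X μ) (hg : Measurable[m] g) :
    ∫⁻ ω, g ω * μ⁻[X|m] ω ∂μ = ∫⁻ ω, g ω * X ω ∂μ := by
  have hcond : AEMeasurable (μ⁻[X|m]) μ := (measurable_condLExp' m μ X).aemeasurable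
  refine Measurable.ennreal_induction (motive := fun g =>
    ∫⁻ ω, g ω * μ⁻[X|m] ω ∂μ = ∫⁻ ω, g ω * X ω ∂μ) (fun c s hs => ?_)
    (fun g₁ g₂ _ hg₁ _ h₁ h₂ => ?_) (fun g hg hmono h => ?_) hg
  · have hind (Y : Ω → ℝ≥0∞) :
        ∫⁻ ω, s.indicator (fun _ => c) ω * Y ω ∂μ = ∫⁻ ω in s, c * Y ω ∂μ := by
      rw [← lintegral_indicator (hm s hs)]
      congr with ω
      by_cases hω : ω ∈ s <;> simp [hω]
    rw [hind, hind, lintegral_const_mul'' _ hcond.restrict, lintegral_const_mul'' _ hX.restrict,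
      setLIntegral_condLExp hm μ X hs]
  · simp only [Pi.add_apply, add_mul]
    rw [lintegral_add_left' (f := fun ω => g₁ ω * μ⁻[X|m] ω)
        ((hg₁.mono hm le_rfl).aemeasurable.mul hcond),
      lintegral_add_left' (f := fun ω => g₁ ω * X ω)
        ((hg₁.mono hm le_rfl).aemeasurable.mul hX), h₁, h₂]
  · simp only [ENNReal.iSup_mul]
    rw [lintegral_iSup' (f := fun n ω => g n ω * μ⁻[X|m] ω)
        (fun n => ((hg n).mono hm le_rfl).aemeasurable.mul hcond)
        (ae_of_all _ fun ω i j hij => mul_le_mul_left (hmono hij ω) _),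
      lintegral_iSup' (f := fun n ω => g n ω * X ω)
        (fun n => ((hg n).mono hm le_rfl).aemeasurable.mul hX)
        (ae_of_all _ fun ω i j hij => mul_le_mul_left (hmono hij ω) _)]
    simp only [h]

theorem lintegral_mul_ofReal_eq_of_condExp_ae_eq (hm : m ≤ m0) [SigmaFinite (μ.trim hm)]
    (hQ : Integrable Q μ) (hQ0 : 0 ≤ᵐ[μ] Q) (hQR : μ[Q|m] =ᵐ[μ] R)
    {g : Ω → ℝ≥0∞} (hg : Measurable[m] g) :
    ∫⁻ ω, g ω * ENNReal.ofReal (Q ω) ∂μ = ∫⁻ ω, g ω * ENNReal.ofReal (R ω) ∂μ := by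
  rw [← lintegral_mul_condLExp hm hQ.aemeasurable.ennreal_ofReal hg]
  refine lintegral_congr_ae ?_
  filter_upwards [condLExp_ofReal m hQ hQ0, hQR] with ω h₁ h₂
  rw [h₁, h₂]

theorem ae_eq_zero_of_condExp_eq_zero (hm : m ≤ m0) [SigmaFinite (μ.trim hm)]
    (hQ : Integrable Q μ) (hQ0 : 0 ≤ᵐ[μ] Q) (hR : Measurable[m] R) (hQR : μ[Q|m] =ᵐ[μ] R) :
    ∀ᵐ ω ∂μ, R ω = 0 → Q ω = 0 := by
  have hs : MeasurableSet[m] {ω | R ω = 0} := hR (measurableSet_singleton 0)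
  have h := lintegral_mul_ofReal_eq_of_condExp_ae_eq hm hQ hQ0 hQR
    (g := {ω | R ω = 0}.indicator fun _ => 1) (measurable_const.indicator hs)
  have hR0 : ∀ ω, {ω | R ω = 0}.indicator (fun _ => 1) ω * ENNReal.ofReal (R ω) = 0 := by
    intro ω
    by_cases hω : R ω = 0 <;> simp [hω]
  simp only [hR0, lintegral_zero] at h
  have hQs := (lintegral_eq_zero_iff' ((aemeasurable_const.indicator (hm _ hs)).mul
    hQ.aemeasurable.ennreal_ofReal)).mp h
  filter_upwards [hQs, hQ0] with ω hω hω0 hRω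
  simp only [Pi.mul_apply, indicator_of_mem (show ω ∈ {ω | R ω = 0} from hRω), one_mul,
    Pi.zero_apply, ENNReal.ofReal_eq_zero] at hω
  exact le_antisymm hω hω0

lemma integrable_negMulLog_comp [IsFiniteMeasure μ] (hQ : Measurable Q)
    (hQ01 : ∀ ω, Q ω ∈ Icc 0 1) : Integrable (fun ω => negMulLog (Q ω)) μ :=
  .of_mem_Icc 0 1 (continuous_negMulLog.measurable.comp hQ).aemeasurable
    (ae_of_all _ fun ω => ⟨negMulLog_nonneg (hQ01 ω).1 (hQ01 ω).2,
      (negMulLog_le_one_sub_self (hQ01 ω).1).trans (by linarith [(hQ01 ω).1])⟩)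

theorem integral_mul_neg_log_of_condExp_ae_eq [IsFiniteMeasure μ] (hm : m ≤ m0)
    (hQ : Integrable Q μ) (hQ0 : 0 ≤ᵐ[μ] Q) (hR : Measurable[m] R) (hR01 : ∀ ω, R ω ∈ Icc 0 1)
    (hQR : μ[Q|m] =ᵐ[μ] R) :
    Integrable (fun ω => Q ω * -log (R ω)) μ ∧
      ∫ ω, Q ω * -log (R ω) ∂μ = ∫ ω, negMulLog (R ω) ∂μ := by
  have hlog : ∀ ω, 0 ≤ -log (R ω) := fun ω => neg_nonneg.mpr (log_nonpos (hR01 ω).1 (hR01 ω).2)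
  have hRm : Measurable R := hR.mono hm le_rfl
  have hent_nonneg : ∀ ω, 0 ≤ negMulLog (R ω) := fun ω => negMulLog_nonneg (hR01 ω).1 (hR01 ω).2
  have hlint : ∫⁻ ω, ENNReal.ofReal (Q ω * -log (R ω)) ∂μ =
      ENNReal.ofReal (∫ ω, negMulLog (R ω) ∂μ) :=
    calc ∫⁻ ω, ENNReal.ofReal (Q ω * -log (R ω)) ∂μ
        = ∫⁻ ω, ENNReal.ofReal (-log (R ω)) * ENNReal.ofReal (Q ω) ∂μ := by
          simp_rw [ENNReal.ofReal_mul' (hlog _), mul_comm]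
      _ = ∫⁻ ω, ENNReal.ofReal (-log (R ω)) * ENNReal.ofReal (R ω) ∂μ :=
          lintegral_mul_ofReal_eq_of_condExp_ae_eq hm hQ hQ0 hQR hR.log.neg.ennreal_ofReal
      _ = ∫⁻ ω, ENNReal.ofReal (negMulLog (R ω)) ∂μ := by
          refine lintegral_congr fun ω => ?_
          rw [← ENNReal.ofReal_mul (hlog ω), negMulLog]
          ring_nf
      _ = ENNReal.ofReal (∫ ω, negMulLog (R ω) ∂μ) :=
          (ofReal_integral_eq_lintegral_ofReal (integrable_negMulLog_comp hRm hR01)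
            (ae_of_all _ hent_nonneg)).symm
  have hnonneg : 0 ≤ᵐ[μ] fun ω => Q ω * -log (R ω) := by
    filter_upwards [hQ0] with ω hω using mul_nonneg hω (hlog ω)
  have hmeas : AEStronglyMeasurable (fun ω => Q ω * -log (R ω)) μ :=
    hQ.aestronglyMeasurable.mul hRm.log.neg.aestronglyMeasurable
  refine ⟨⟨hmeas, ?_⟩, ?_⟩
  · rw [hasFiniteIntegral_iff_ofReal hnonneg, hlint]
    exact ENNReal.ofReal_lt_top
  · rw [integral_eq_lintegral_of_nonneg_ae hnonneg hmeas, hlint,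
      ENNReal.toReal_ofReal (integral_nonneg hent_nonneg)]

theorem integral_mul_klFun_div_of_condExp_ae_eq [IsFiniteMeasure μ] (hm : m ≤ m0)
    (hQ : Measurable Q) (hQ01 : ∀ ω, Q ω ∈ Icc 0 1) (hR : Measurable[m] R)
    (hR01 : ∀ ω, R ω ∈ Icc 0 1) (hQR : μ[Q|m] =ᵐ[μ] R) :
    Integrable (fun ω => R ω * klFun (Q ω / R ω)) μ ∧
      ∫ ω, R ω * klFun (Q ω / R ω) ∂μ = ∫ ω, negMulLog (R ω) ∂μ - ∫ ω, negMulLog (Q ω) ∂μ := by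
  have hQi : Integrable Q μ := .of_mem_Icc 0 1 hQ.aemeasurable (ae_of_all _ hQ01)
  have hRi : Integrable R μ := .of_mem_Icc 0 1 (hR.mono hm le_rfl).aemeasurable (ae_of_all _ hR01)
  have hQ0 : 0 ≤ᵐ[μ] Q := ae_of_all _ fun ω => (hQ01 ω).1
  have hentQ := integrable_negMulLog_comp (μ := μ) hQ hQ01
  obtain ⟨hlogi, hlog⟩ := integral_mul_neg_log_of_condExp_ae_eq hm hQi hQ0 hR hR01 hQR
  have heq : (fun ω => R ω * klFun (Q ω / R ω)) =ᵐ[μ]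
      fun ω => Q ω * -log (R ω) - negMulLog (Q ω) + (R ω - Q ω) := by
    filter_upwards [ae_eq_zero_of_condExp_eq_zero hm hQi hQ0 hR hQR] with ω hω
    rcases (hR01 ω).1.eq_or_lt with h | h
    · simp [← h, hω h.symm]
    · exact mul_klFun_div_eq (hQ01 ω).1 h
  have hRQ : ∫ ω, R ω ∂μ = ∫ ω, Q ω ∂μ := (integral_congr_ae hQR).symm.trans (integral_condExp hm)
  have h₁ : Integrable (fun ω => Q ω * -log (R ω) - negMulLog (Q ω)) μ := hlogi.sub hentQ
  have h₂ : Integrable (fun ω => R ω - Q ω) μ := hRi.sub hQi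
  refine ⟨(h₁.add h₂).congr heq.symm, ?_⟩
  rw [integral_congr_ae heq, integral_add h₁ h₂, integral_sub hlogi hentQ, integral_sub hRi hQi,
    hlog, hRQ]
  ring

theorem integral_negMulLog_le_of_condExp_ae_eq [IsFiniteMeasure μ] (hm : m ≤ m0)
    (hQ : Measurable Q) (hQ01 : ∀ ω, Q ω ∈ Icc 0 1) (hR : Measurable[m] R)
    (hR01 : ∀ ω, R ω ∈ Icc 0 1) (hQR : μ[Q|m] =ᵐ[μ] R) :
    ∫ ω, negMulLog (Q ω) ∂μ ≤ ∫ ω, negMulLog (R ω) ∂μ := by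
  have h := (integral_mul_klFun_div_of_condExp_ae_eq hm hQ hQ01 hR hR01 hQR).2
  have : 0 ≤ ∫ ω, R ω * klFun (Q ω / R ω) ∂μ := integral_nonneg fun ω =>
    mul_nonneg (hR01 ω).1 (klFun_nonneg (div_nonneg (hQ01 ω).1 (hR01 ω).1))
  linarith

theorem two_mul_integral_abs_sub_le_of_condExp_ae_eq [IsFiniteMeasure μ] (hm : m ≤ m0)
    (hQ : Measurable Q) (hQ01 : ∀ ω, Q ω ∈ Icc 0 1) (hR : Measurable[m] R)
    (hR01 : ∀ ω, R ω ∈ Icc 0 1) (hQR : μ[Q|m] =ᵐ[μ] R) (ε : ℝ) :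
    2 * ε * ∫ ω, |Q ω - R ω| ∂μ ≤
      ε ^ 2 * (∫ ω, negMulLog (R ω) ∂μ - ∫ ω, negMulLog (Q ω) ∂μ) + 2 * ∫ ω, Q ω ∂μ := by
  have hQi : Integrable Q μ := .of_mem_Icc 0 1 hQ.aemeasurable (ae_of_all _ hQ01)
  have hRi : Integrable R μ := .of_mem_Icc 0 1 (hR.mono hm le_rfl).aemeasurable (ae_of_all _ hR01)
  obtain ⟨hBi, hB⟩ := integral_mul_klFun_div_of_condExp_ae_eq hm hQ hQ01 hR hR01 hQR
  have hRQ : ∫ ω, R ω ∂μ = ∫ ω, Q ω ∂μ := (integral_congr_ae hQR).symm.trans (integral_condExp hm)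
  have hwi : Integrable (fun ω => (2 * Q ω + 4 * R ω) / 3) μ :=
    ((hQi.const_mul 2).add (hRi.const_mul 4)).div_const 3
  calc 2 * ε * ∫ ω, |Q ω - R ω| ∂μ = ∫ ω, 2 * ε * |Q ω - R ω| ∂μ := (integral_const_mul _ _).symm
    _ ≤ ∫ ω, ε ^ 2 * (R ω * klFun (Q ω / R ω)) + (2 * Q ω + 4 * R ω) / 3 ∂μ := by
        refine integral_mono_ae ((hQi.sub hRi).abs.const_mul _) ((hBi.const_mul _).add hwi) ?_
        filter_upwards [ae_eq_zero_of_condExp_eq_zero hm hQi (ae_of_all _ fun ω => (hQ01 ω).1)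
          hR hQR] with ω hω
        rcases (hR01 ω).1.eq_or_lt with h | h
        · simp [← h, hω h.symm]
        · exact two_mul_abs_sub_le_mul_klFun (hQ01 ω).1 h ε
    _ = ε ^ 2 * (∫ ω, negMulLog (R ω) ∂μ - ∫ ω, negMulLog (Q ω) ∂μ) + 2 * ∫ ω, Q ω ∂μ := by
        rw [integral_add (hBi.const_mul _) hwi, integral_const_mul, hB, integral_div,
          integral_add (hQi.const_mul 2) (hRi.const_mul 4), integral_const_mul,
          integral_const_mul, hRQ]
        ring

section ProbabilityVectors

variable {X : Type*}

theorem hasSum_integral_of_tsum_eq_one [IsProbabilityMeasure μ] [Countable X] {P : Ω → X → ℝ}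
    (hP : ∀ x, Measurable fun ω => P ω x) (hnn : ∀ ω x, 0 ≤ P ω x) (hsum : ∀ ω, ∑' x, P ω x = 1) :
    HasSum (fun x => ∫ ω, P ω x ∂μ) 1 := by
  have henorm : ∀ ω, ∑' x, ‖P ω x‖ₑ = 1 := fun ω => by
    simp_rw [Real.enorm_of_nonneg (hnn ω _)]
    rw [← ENNReal.ofReal_tsum_of_nonneg (hnn ω) (summable_of_tsum_eq_one (hsum ω)), hsum ω,
      ENNReal.ofReal_one]
  have h : ∑' x, ∫ ω, P ω x ∂μ = 1 := by
    rw [← integral_tsum (fun x => (hP x).aestronglyMeasurable)]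
    · simp [hsum]
    · rw [← lintegral_tsum fun x => (hP x).enorm.aemeasurable]
      simp [henorm]
  exact h ▸ (summable_of_tsum_eq_one h).hasSum

variable {ℱ : Filtration ℕ m0} {f : ℕ → Ω → X → ℝ}

theorem integral_negMulLog_antitone [IsFiniteMeasure μ] (hnn : ∀ t ω x, 0 ≤ f t ω x)
    (hsum : ∀ t ω, ∑' x, f t ω x = 1) (hmart : ∀ x, Martingale (fun t ω => f t ω x) ℱ μ)
    (x : X) : Antitone fun t => ∫ ω, negMulLog (f t ω x) ∂μ := fun i j hij =>
  integral_negMulLog_le_of_condExp_ae_eq (ℱ.le i)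
    (((hmart x).stronglyAdapted j).mono (ℱ.le j)).measurable
    (fun ω => mem_Icc_of_tsum_eq_one (hnn j ω) (hsum j ω) x)
    ((hmart x).stronglyAdapted i).measurable
    (fun ω => mem_Icc_of_tsum_eq_one (hnn i ω) (hsum i ω) x) ((hmart x).condExp_ae_eq hij)

theorem two_mul_integral_tsum_abs_sub_le [IsProbabilityMeasure μ] [Countable X]
    (hnn : ∀ t ω x, 0 ≤ f t ω x) (hsum : ∀ t ω, ∑' x, f t ω x = 1)
    (hmart : ∀ x, Martingale (fun t ω => f t ω x) ℱ μ) {i j : ℕ} (hij : i ≤ j)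
    (hdrop : Summable fun x => ∫ ω, negMulLog (f i ω x) ∂μ - ∫ ω, negMulLog (f j ω x) ∂μ)
    (ε : ℝ) :
    2 * ε * ∫ ω, ∑' x, |f j ω x - f i ω x| ∂μ ≤
      ε ^ 2 * ∑' x, (∫ ω, negMulLog (f i ω x) ∂μ - ∫ ω, negMulLog (f j ω x) ∂μ) + 2 := by
  have hmeas : ∀ t x, Measurable fun ω => f t ω x := fun t x =>
    (((hmart x).stronglyAdapted t).mono (ℱ.le t)).measurable
  have h01 : ∀ t ω x, f t ω x ∈ Icc 0 1 := fun t ω =>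
    mem_Icc_of_tsum_eq_one (hnn t ω) (hsum t ω)
  have hint : ∀ t x, Integrable (fun ω => f t ω x) μ := fun t x =>
    .of_mem_Icc 0 1 (hmeas t x).aemeasurable (ae_of_all _ fun ω => h01 t ω x)
  have hmean : ∀ t, HasSum (fun x => ∫ ω, f t ω x ∂μ) 1 := fun t =>
    hasSum_integral_of_tsum_eq_one (hmeas t) (hnn t) (hsum t)
  have habs : Summable fun x => ∫ ω, |f j ω x - f i ω x| ∂μ := by
    refine Summable.of_nonneg_of_le (fun x => integral_nonneg fun ω => abs_nonneg _)
      (fun x => ?_) ((hmean j).summable.add (hmean i).summable)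
    rw [← integral_add (hint j x) (hint i x)]
    refine integral_mono ((hint j x).sub (hint i x)).abs ((hint j x).add (hint i x)) fun ω => ?_
    simpa [abs_of_nonneg (hnn j ω x), abs_of_nonneg (hnn i ω x)] using
      abs_sub (f j ω x) (f i ω x)
  have hstep : ∀ x, 2 * ε * ∫ ω, |f j ω x - f i ω x| ∂μ ≤
      ε ^ 2 * (∫ ω, negMulLog (f i ω x) ∂μ - ∫ ω, negMulLog (f j ω x) ∂μ) +
        2 * ∫ ω, f j ω x ∂μ := fun x =>
    two_mul_integral_abs_sub_le_of_condExp_ae_eq (ℱ.le i) (hmeas j x) (h01 j · x)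
      ((hmart x).stronglyAdapted i).measurable (h01 i · x) ((hmart x).condExp_ae_eq hij) ε
  calc 2 * ε * ∫ ω, ∑' x, |f j ω x - f i ω x| ∂μ
      = ∑' x, 2 * ε * ∫ ω, |f j ω x - f i ω x| ∂μ := by
        rw [← integral_tsum_of_summable_integral_norm
          (F := fun x ω => |f j ω x - f i ω x|) (fun x => ((hint j x).sub (hint i x)).abs)
          (by simpa using habs), tsum_mul_left]
    _ ≤ ∑' x, (ε ^ 2 * (∫ ω, negMulLog (f i ω x) ∂μ - ∫ ω, negMulLog (f j ω x) ∂μ) +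
          2 * ∫ ω, f j ω x ∂μ) :=
        Summable.tsum_le_tsum hstep (habs.mul_left _)
          ((hdrop.mul_left _).add ((hmean j).summable.mul_left 2))
    _ = _ := by
        rw [Summable.tsum_add (hdrop.mul_left _) ((hmean j).summable.mul_left 2), tsum_mul_left,
          tsum_mul_left, (hmean j).tsum_eq, mul_one]

theorem two_mul_sum_integral_tsum_abs_sub_le [IsProbabilityMeasure μ] [Countable X]
    (hnn : ∀ t ω x, 0 ≤ f t ω x) (hsum : ∀ t ω, ∑' x, f t ω x = 1)
    (hmart : ∀ x, Martingale (fun t ω => f t ω x) ℱ μ)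
    (hH : Summable fun x => ∫ ω, negMulLog (f 0 ω x) ∂μ) (k : ℕ) (ε : ℝ) :
    2 * ε * ∑ t ∈ Finset.Icc 1 k, ∫ ω, ∑' x, |f t ω x - f (t - 1) ω x| ∂μ ≤
      ε ^ 2 * ∑' x, ∫ ω, negMulLog (f 0 ω x) ∂μ + 2 * k := by
  set e : ℕ → X → ℝ := fun t x => ∫ ω, negMulLog (f t ω x) ∂μ
  have he_nonneg : ∀ t x, 0 ≤ e t x := fun t x => integral_nonneg fun ω =>
    negMulLog_nonneg (mem_Icc_of_tsum_eq_one (hnn t ω) (hsum t ω) x).1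
      (mem_Icc_of_tsum_eq_one (hnn t ω) (hsum t ω) x).2
  have he_sum : ∀ t, Summable (e t) := fun t => hH.of_nonneg_of_le (he_nonneg t)
    fun x => integral_negMulLog_antitone hnn hsum hmart x (Nat.zero_le t)
  calc 2 * ε * ∑ t ∈ Finset.Icc 1 k, ∫ ω, ∑' x, |f t ω x - f (t - 1) ω x| ∂μ
      ≤ ∑ t ∈ Finset.Icc 1 k, (ε ^ 2 * (∑' x, e (t - 1) x - ∑' x, e t x) + 2) := by
        rw [Finset.mul_sum]
        refine Finset.sum_le_sum fun t _ => ?_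
        rw [← (he_sum _).tsum_sub (he_sum t)]
        exact two_mul_integral_tsum_abs_sub_le hnn hsum hmart (Nat.sub_le t 1)
          ((he_sum _).sub (he_sum t)) ε
    _ = ε ^ 2 * (∑' x, e 0 x - ∑' x, e k x) + 2 * k := by
        rw [Finset.sum_add_distrib, ← Finset.mul_sum,
          Finset.sum_Icc_pred_sub (fun t => ∑' x, e t x)]
        simp [mul_comm]
    _ ≤ ε ^ 2 * ∑' x, e 0 x + 2 * k := by
        have : 0 ≤ ∑' x, e k x := tsum_nonneg (he_nonneg k)
        gcongr
        linarith

end ProbabilityVectors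

end MeasureTheory

/-- The variation of a `k`-step martingale of probability mass functions on a countable
set `X`, starting at a constant `p` with finite entropy `H(p)`, is at most
`sqrt (2 k H(p))`. Entropy with natural logarithm, `0 log 0 = 0` via `Real.negMulLog`. -/
theorem stmt8 {Ω : Type} {m : MeasurableSpace Ω} (μ : Measure Ω) [IsProbabilityMeasure μ]
    (ℱ : Filtration ℕ m) (k : ℕ) {X : Type} [Countable X] (p : X → ℝ)
    (f : ℕ → Ω → X → ℝ)
    (hnn : ∀ t ω x, 0 ≤ f t ω x) (hsum : ∀ t ω, ∑' x, f t ω x = 1)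
    (h0 : ∀ ω, f 0 ω = p)
    (hmart : ∀ x, Martingale (fun t ω => f t ω x) ℱ μ)
    (hH : Summable fun x => Real.negMulLog (p x)) :
    ∑ t ∈ Finset.Icc 1 k, ∫ ω, ∑' x, |f t ω x - f (t - 1) ω x| ∂μ
      ≤ Real.sqrt (2 * k * ∑' x, Real.negMulLog (p x)) := by
  have hentropy : (fun x => ∫ ω, negMulLog (f 0 ω x) ∂μ) = fun x => negMulLog (p x) := by
    simp [h0]
  refine (le_sqrt_mul_of_forall_two_mul_le fun ε => ?_).trans_eq (congrArg _ (mul_comm _ _))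
  simpa [hentropy] using
    two_mul_sum_integral_tsum_abs_sub_le hnn hsum hmart (hentropy ▸ hH) k ε
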